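/- Let π_b be a behavior policy of the fixed finite discounted MDP with π_b(s,a) > 0 for all (s,a), let β > 0, and let π' be a policy satisfying ∑_a π_b(s,a) A_R^{π'}(s,a) ≥ β for every state s. Then for any policy π with π(s,a) > 0 for all (s,a), J_R(π) − J_R(π') ≥ β/(1−γ) − (ε'/(1−γ)) √(2 D^π_KL(π, π_b)), where ε' = max_{s,a} |A_R^{π'}(s,a)|. -/

import Mathlib

open Finset

/-- Time-`t` state distribution of policy `π` in the MDP with transitions `P`
and initial distribution `μ`. -/
noncomputable def pDist {S A : Type*} [Fintype S] [Fintype A]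
    (P : S → A → S → ℝ) (μ : S → ℝ) (π : S → A → ℝ) : ℕ → S → ℝ
  | 0 => μ
  | t + 1 => fun s' => ∑ s, ∑ a, pDist P μ π t s * π s a * P s a s'

/-- Discounted state visitation distribution `d^π`. -/
noncomputable def dvisit {S A : Type*} [Fintype S] [Fintype A]
    (P : S → A → S → ℝ) (μ : S → ℝ) (γ : ℝ) (π : S → A → ℝ) (s : S) : ℝ :=
  (1 - γ) * ∑' t : ℕ, γ ^ t * pDist P μ π t s

/-- Discounted return `J_R(π)`. -/
noncomputable def Jret {S A : Type*} [Fintype S] [Fintype A]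
    (P : S → A → S → ℝ) (μ : S → ℝ) (γ : ℝ) (R : S → A → ℝ) (π : S → A → ℝ) : ℝ :=
  ∑' t : ℕ, γ ^ t * ∑ s, ∑ a, pDist P μ π t s * π s a * R s a

/-- Advantage function `A_R^π(s,a) = Q_R^π(s,a) - V_R^π(s)`, expressed in terms of
the value function `V` of the policy. -/
noncomputable def Adv {S A : Type*} [Fintype S]
    (P : S → A → S → ℝ) (γ : ℝ) (R : S → A → ℝ) (V : S → ℝ) (s : S) (a : A) : ℝ :=
  (R s a + γ * ∑ s', P s a s' * V s') - V s

/-- KL divergence between two distributions on a finite type. -/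
noncomputable def KL {X : Type*} [Fintype X] (p q : X → ℝ) : ℝ :=
  ∑ x, p x * Real.log (p x / q x)

/-- Total variation distance between two distributions on a finite type. -/
noncomputable def TV {X : Type*} [Fintype X] (p q : X → ℝ) : ℝ :=
  (1 / 2) * ∑ x, |p x - q x|


open InformationTheory Set

/-!
By the performance difference lemma, `J(π) - J(π')` is `(1 - γ)⁻¹` times the `d^π`-average of
`c(s) = ∑ₐ π(s,a) A'(s,a)`. In each state `c(s)` differs from `∑ₐ π_b(s,a) A'(s,a) ≥ β` by at most
`ε' ‖π(s) - π_b(s)‖₁ ≤ ε' √(2 KL(π(s), π_b(s)))` (Pinsker), and concavity of `√` moves the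
`d^π`-average inside the square root.
-/

-- Convex on `(0, ∞)` with a double zero at `1`, hence nonnegative.
noncomputable def pinskerGap (t : ℝ) : ℝ := klFun t - 3 * (t - 1) ^ 2 / (2 * (t + 2))

noncomputable def pinskerGapDeriv (t : ℝ) : ℝ :=
  Real.log t - 3 * (t - 1) * (t + 5) / (2 * (t + 2) ^ 2)

lemma hasDerivAt_pinskerGap {t : ℝ} (ht : 0 < t) :
    HasDerivAt pinskerGap (pinskerGapDeriv t) t := by
  have hq : HasDerivAt (fun t : ℝ => 3 * (t - 1) ^ 2 / (2 * (t + 2)))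
      ((3 * (2 * (t - 1)) * (2 * (t + 2)) - 3 * (t - 1) ^ 2 * 2) / (2 * (t + 2)) ^ 2) t :=
    HasDerivAt.div (by simpa using (((hasDerivAt_id t).sub_const 1).pow 2).const_mul 3)
      (by simpa using ((hasDerivAt_id t).add_const 2).const_mul 2) (by positivity)
  refine ((hasDerivAt_klFun ht.ne').sub hq).congr_deriv ?_
  unfold pinskerGapDeriv
  field_simp
  ring

lemma hasDerivAt_pinskerGapDeriv {t : ℝ} (ht : 0 < t) :
    HasDerivAt pinskerGapDeriv (1 / t - 27 / (t + 2) ^ 3) t := by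
  have hnum : HasDerivAt (fun t : ℝ => 3 * (t - 1) * (t + 5)) (6 * t + 12) t :=
    ((((hasDerivAt_id t).sub_const 1).const_mul 3).mul
      ((hasDerivAt_id t).add_const 5)).congr_deriv (by simp only [mul_one, id_eq]; ring)
  have hq : HasDerivAt (fun t : ℝ => 3 * (t - 1) * (t + 5) / (2 * (t + 2) ^ 2))
      (((6 * t + 12) * (2 * (t + 2) ^ 2) - 3 * (t - 1) * (t + 5) * (2 * (2 * (t + 2))))
        / (2 * (t + 2) ^ 2) ^ 2) t :=
    hnum.div (by simpa using (((hasDerivAt_id t).add_const 2).pow 2).const_mul 2) (by positivity)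
  refine ((Real.hasDerivAt_log ht.ne').sub hq).congr_deriv ?_
  field_simp
  ring

lemma monotoneOn_pinskerGapDeriv : MonotoneOn pinskerGapDeriv (Ioi 0) := by
  refine monotoneOn_of_hasDerivWithinAt_nonneg (convex_Ioi 0)
    (fun t ht => (hasDerivAt_pinskerGapDeriv ht).continuousAt.continuousWithinAt)
    (fun t ht => (hasDerivAt_pinskerGapDeriv (interior_subset ht)).hasDerivWithinAt)
    fun t ht => ?_
  rw [interior_Ioi, Set.mem_Ioi] at ht
  -- `27 t ≤ (t + 2) ^ 3` is AM-GM for `t, 1, 1`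
  rw [sub_nonneg, div_le_div_iff₀ (by positivity) ht]
  nlinarith [sq_nonneg (t - 1)]

lemma pinskerGap_nonneg {t : ℝ} (ht : 0 ≤ t) : 0 ≤ pinskerGap t := by
  have hcont : ContinuousOn pinskerGap (Ici 0) := fun x (hx : 0 ≤ x) =>
    (continuous_klFun.continuousAt.sub ((by fun_prop : Continuous fun t : ℝ => 3 * (t - 1) ^ 2)
      |>.continuousAt.div (by fun_prop) (by positivity))).continuousWithinAt
  have hone : pinskerGap 1 = 0 := by simp [pinskerGap, klFun]
  have hderiv_one : pinskerGapDeriv 1 = 0 := by norm_num [pinskerGapDeriv]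
  rcases le_total t 1 with h | h
  · have hanti : AntitoneOn pinskerGap (Icc 0 1) := by
      refine antitoneOn_of_hasDerivWithinAt_nonpos (f' := pinskerGapDeriv) (convex_Icc 0 1)
        (hcont.mono Icc_subset_Ici_self) (fun x hx => ?_) fun x hx => ?_
      · rw [interior_Icc] at hx ⊢
        exact (hasDerivAt_pinskerGap hx.1).hasDerivWithinAt
      · rw [interior_Icc] at hx
        exact hderiv_one ▸ monotoneOn_pinskerGapDeriv hx.1 (Set.mem_Ioi.2 one_pos) hx.2.le
    exact hone ▸ hanti ⟨ht, h⟩ ⟨zero_le_one, le_rfl⟩ h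
  · have hmono : MonotoneOn pinskerGap (Ici 1) := by
      refine monotoneOn_of_hasDerivWithinAt_nonneg (f' := pinskerGapDeriv) (convex_Ici 1)
        (hcont.mono (Ici_subset_Ici.2 zero_le_one)) (fun x hx => ?_) fun x hx => ?_
      · rw [interior_Ici] at hx ⊢
        exact (hasDerivAt_pinskerGap (zero_lt_one.trans hx)).hasDerivWithinAt
      · rw [interior_Ici] at hx
        exact hderiv_one ▸ monotoneOn_pinskerGapDeriv (Set.mem_Ioi.2 one_pos)
          (Set.mem_Ioi.2 (zero_lt_one.trans hx)) hx.le
    exact hone ▸ hmono (mem_Ici.2 le_rfl) h h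

section Pinsker

variable {X : Type*} [Fintype X] {p q : X → ℝ}

lemma KL_eq_sum_mul_klFun (hq : ∀ x, 0 < q x) (hp1 : ∑ x, p x = 1) (hq1 : ∑ x, q x = 1) :
    KL p q = ∑ x, q x * klFun (p x / q x) := by
  have hterm : ∀ x, q x * klFun (p x / q x) = p x * Real.log (p x / q x) + (q x - p x) := by
    intro x
    have := (hq x).ne'
    simp only [klFun]
    field_simp
    ring
  simp only [hterm, Finset.sum_add_distrib, Finset.sum_sub_distrib, hp1, hq1, sub_self, add_zero,
    KL]

lemma KL_nonneg (hp : ∀ x, 0 ≤ p x) (hq : ∀ x, 0 < q x) (hp1 : ∑ x, p x = 1)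
    (hq1 : ∑ x, q x = 1) : 0 ≤ KL p q := by
  rw [KL_eq_sum_mul_klFun hq hp1 hq1]
  exact Finset.sum_nonneg fun x _ =>
    mul_nonneg (hq x).le (klFun_nonneg (div_nonneg (hp x) (hq x).le))

lemma sq_sub_div_le_mul_klFun {a b : ℝ} (ha : 0 ≤ a) (hb : 0 < b) :
    3 * (a - b) ^ 2 / (2 * (a + 2 * b)) ≤ b * klFun (a / b) := by
  have h := mul_nonneg hb.le (pinskerGap_nonneg (div_nonneg ha hb.le))
  have hscale : b * (3 * (a / b - 1) ^ 2 / (2 * (a / b + 2))) =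
      3 * (a - b) ^ 2 / (2 * (a + 2 * b)) := by
    field_simp
  rw [pinskerGap, mul_sub, hscale] at h
  linarith

/-- **Pinsker's inequality**, with the `ℓ¹` distance `2 D_TV`. -/
theorem sq_sum_abs_sub_le_two_mul_KL (hp : ∀ x, 0 ≤ p x) (hq : ∀ x, 0 < q x)
    (hp1 : ∑ x, p x = 1) (hq1 : ∑ x, q x = 1) :
    (∑ x, |p x - q x|) ^ 2 ≤ 2 * KL p q := by
  have hpq : ∀ x, 0 < p x + 2 * q x := fun x => by linarith [hp x, hq x]
  -- Cauchy–Schwarz against the weights `2 (p + 2 q) / 3`, which sum to `2`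
  have hCS := Finset.sum_sq_le_sum_mul_sum_of_sq_le_mul Finset.univ
    (r := fun x => |p x - q x|) (f := fun x => 3 * (p x - q x) ^ 2 / (2 * (p x + 2 * q x)))
    (g := fun x => 2 * (p x + 2 * q x) / 3)
    (fun x _ => by have := hpq x; positivity) (fun x _ => by have := hpq x; positivity)
    fun x _ => le_of_eq <| by
      rw [sq_abs, div_mul_div_cancel₀ (mul_pos two_pos (hpq x)).ne']
      ring
  have hweights : ∑ x, 2 * (p x + 2 * q x) / 3 = 2 := by
    simp only [← Finset.sum_div, ← Finset.mul_sum, Finset.sum_add_distrib, hp1, hq1]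
    norm_num
  have hbound : ∑ x, 3 * (p x - q x) ^ 2 / (2 * (p x + 2 * q x)) ≤ KL p q := by
    rw [KL_eq_sum_mul_klFun hq hp1 hq1]
    exact Finset.sum_le_sum fun x _ => sq_sub_div_le_mul_klFun (hp x) (hq x)
  rw [hweights] at hCS
  linarith

lemma abs_sum_mul_sub_sum_mul_le {f : X → ℝ} {E : ℝ} (hp : ∀ x, 0 ≤ p x) (hq : ∀ x, 0 < q x)
    (hp1 : ∑ x, p x = 1) (hq1 : ∑ x, q x = 1) (hE : 0 ≤ E) (hf : ∀ x, |f x| ≤ E) :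
    |∑ x, p x * f x - ∑ x, q x * f x| ≤ E * Real.sqrt (2 * KL p q) := by
  calc |∑ x, p x * f x - ∑ x, q x * f x|
      = |∑ x, (p x - q x) * f x| := by simp only [sub_mul, Finset.sum_sub_distrib]
    _ ≤ ∑ x, |p x - q x| * E := by
        refine (Finset.abs_sum_le_sum_abs _ _).trans (Finset.sum_le_sum fun x _ => ?_)
        rw [abs_mul]
        exact mul_le_mul_of_nonneg_left (hf x) (abs_nonneg _)
    _ = E * ∑ x, |p x - q x| := by rw [← Finset.sum_mul, mul_comm]
    _ ≤ E * Real.sqrt (2 * KL p q) :=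
        mul_le_mul_of_nonneg_left
          (Real.le_sqrt_of_sq_le (sq_sum_abs_sub_le_two_mul_KL hp hq hp1 hq1)) hE

end Pinsker

lemma sum_mul_sqrt_le_sqrt_sum_mul {ι : Type*} [Fintype ι] {w k : ι → ℝ} (hw : ∀ i, 0 ≤ w i)
    (hw1 : ∑ i, w i = 1) (hk : ∀ i, 0 ≤ k i) :
    ∑ i, w i * Real.sqrt (k i) ≤ Real.sqrt (∑ i, w i * k i) := by
  refine Real.le_sqrt_of_sq_le ?_
  have := Finset.sum_sq_le_sum_mul_sum_of_sq_le_mul Finset.univ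
    (r := fun i => w i * Real.sqrt (k i)) (f := w) (g := fun i => w i * k i) (fun i _ => hw i)
    (fun i _ => mul_nonneg (hw i) (hk i))
    fun i _ => le_of_eq <| by rw [mul_pow, Real.sq_sqrt (hk i)]; ring
  rwa [hw1, one_mul] at this

lemma sub_mul_sqrt_sum_le_sum_mul {ι : Type*} [Fintype ι] {w c k : ι → ℝ} {β E : ℝ}
    (hw : ∀ i, 0 ≤ w i) (hw1 : ∑ i, w i = 1) (hk : ∀ i, 0 ≤ k i) (hE : 0 ≤ E)
    (hc : ∀ i, β - E * Real.sqrt (k i) ≤ c i) :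
    β - E * Real.sqrt (∑ i, w i * k i) ≤ ∑ i, w i * c i :=
  calc β - E * Real.sqrt (∑ i, w i * k i)
      ≤ β - E * ∑ i, w i * Real.sqrt (k i) :=
        sub_le_sub_left (mul_le_mul_of_nonneg_left (sum_mul_sqrt_le_sqrt_sum_mul hw hw1 hk) hE) _
    _ = ∑ i, w i * (β - E * Real.sqrt (k i)) := by
        simp only [mul_sub, Finset.sum_sub_distrib, ← Finset.sum_mul, hw1, one_mul,
          Finset.mul_sum, mul_left_comm]
    _ ≤ ∑ i, w i * c i := Finset.sum_le_sum fun i _ => mul_le_mul_of_nonneg_left (hc i) (hw i)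

lemma summable_pow_mul_of_abs_le {γ : ℝ} (hγ0 : 0 ≤ γ) (hγ1 : γ < 1) {u : ℕ → ℝ} {C : ℝ}
    (hu : ∀ t, |u t| ≤ C) : Summable fun t => γ ^ t * u t := by
  refine ((summable_geometric_of_lt_one hγ0 hγ1).mul_right C).of_norm_bounded fun t => ?_
  rw [norm_mul, norm_pow, Real.norm_of_nonneg hγ0, Real.norm_eq_abs]
  exact mul_le_mul_of_nonneg_left (hu t) (pow_nonneg hγ0 t)

lemma tsum_pow_mul_eq_of_telescope {γ : ℝ} (hγ0 : 0 ≤ γ) (hγ1 : γ < 1) {u b : ℕ → ℝ} {C : ℝ}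
    (h : ∀ t, u t = b t + γ * u (t + 1)) (hu : ∀ t, |u t| ≤ C) :
    ∑' t, γ ^ t * b t = u 0 := by
  have hsum := summable_pow_mul_of_abs_le hγ0 hγ1 hu
  have hterm : ∀ t, γ ^ t * b t = γ ^ t * u t - γ ^ (t + 1) * u (t + 1) := fun t => by
    rw [h t, pow_succ]; ring
  rw [tsum_congr hterm, hsum.tsum_sub ((summable_nat_add_iff 1).2 hsum), hsum.tsum_eq_zero_add]
  simp

section MDP

variable {S A : Type*} [Fintype S] [Fintype A] {P : S → A → S → ℝ} {μ : S → ℝ}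
  {π : S → A → ℝ} {γ : ℝ}

lemma pDist_nonneg (hP0 : ∀ s a s', 0 ≤ P s a s') (hμ0 : ∀ s, 0 ≤ μ s)
    (hπ0 : ∀ s a, 0 ≤ π s a) (t : ℕ) (s : S) : 0 ≤ pDist P μ π t s := by
  induction t generalizing s with
  | zero => exact hμ0 s
  | succ t ih =>
    exact Finset.sum_nonneg fun s' _ => Finset.sum_nonneg fun a _ =>
      mul_nonneg (mul_nonneg (ih s') (hπ0 s' a)) (hP0 s' a s)

lemma sum_pDist_succ_mul (V : S → ℝ) (t : ℕ) :
    ∑ s', pDist P μ π (t + 1) s' * V s' =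
      ∑ s, pDist P μ π t s * ∑ a, π s a * ∑ s', P s a s' * V s' := by
  simp only [pDist, Finset.sum_mul, Finset.mul_sum]
  rw [Finset.sum_comm]
  refine Finset.sum_congr rfl fun s _ => ?_
  rw [Finset.sum_comm]
  exact Finset.sum_congr rfl fun a _ => Finset.sum_congr rfl fun s' _ => by ring

lemma sum_pDist (hP1 : ∀ s a, ∑ s', P s a s' = 1) (hμ1 : ∑ s, μ s = 1)
    (hπ1 : ∀ s, ∑ a, π s a = 1) (t : ℕ) : ∑ s, pDist P μ π t s = 1 := by
  induction t with
  | zero => exact hμ1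
  | succ t ih =>
    simpa [hP1, hπ1, ih] using sum_pDist_succ_mul (P := P) (μ := μ) (π := π) (fun _ => 1) t

lemma pDist_le_one (hP0 : ∀ s a s', 0 ≤ P s a s') (hP1 : ∀ s a, ∑ s', P s a s' = 1)
    (hμ0 : ∀ s, 0 ≤ μ s) (hμ1 : ∑ s, μ s = 1) (hπ0 : ∀ s a, 0 ≤ π s a)
    (hπ1 : ∀ s, ∑ a, π s a = 1) (t : ℕ) (s : S) : pDist P μ π t s ≤ 1 :=
  sum_pDist hP1 hμ1 hπ1 t ▸
    Finset.single_le_sum (fun s' _ => pDist_nonneg hP0 hμ0 hπ0 t s') (Finset.mem_univ s)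

lemma abs_sum_pDist_mul_le (hP0 : ∀ s a s', 0 ≤ P s a s') (hP1 : ∀ s a, ∑ s', P s a s' = 1)
    (hμ0 : ∀ s, 0 ≤ μ s) (hμ1 : ∑ s, μ s = 1) (hπ0 : ∀ s a, 0 ≤ π s a)
    (hπ1 : ∀ s, ∑ a, π s a = 1) (f : S → ℝ) (t : ℕ) :
    |∑ s, pDist P μ π t s * f s| ≤ ∑ s, |f s| := by
  refine (Finset.abs_sum_le_sum_abs _ _).trans (Finset.sum_le_sum fun s _ => ?_)
  rw [abs_mul, abs_of_nonneg (pDist_nonneg hP0 hμ0 hπ0 t s)]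
  exact mul_le_of_le_one_left (abs_nonneg _) (pDist_le_one hP0 hP1 hμ0 hμ1 hπ0 hπ1 t s)

lemma summable_pow_mul_pDist (hP0 : ∀ s a s', 0 ≤ P s a s') (hP1 : ∀ s a, ∑ s', P s a s' = 1)
    (hμ0 : ∀ s, 0 ≤ μ s) (hμ1 : ∑ s, μ s = 1) (hπ0 : ∀ s a, 0 ≤ π s a)
    (hπ1 : ∀ s, ∑ a, π s a = 1) (hγ0 : 0 ≤ γ) (hγ1 : γ < 1) (s : S) :
    Summable fun t => γ ^ t * pDist P μ π t s :=
  summable_pow_mul_of_abs_le hγ0 hγ1 fun t => abs_le.2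
    ⟨by linarith [pDist_nonneg hP0 hμ0 hπ0 t s], pDist_le_one hP0 hP1 hμ0 hμ1 hπ0 hπ1 t s⟩

lemma Jret_eq_sum_mul_of_bellman (hP0 : ∀ s a s', 0 ≤ P s a s')
    (hP1 : ∀ s a, ∑ s', P s a s' = 1) (hμ0 : ∀ s, 0 ≤ μ s) (hμ1 : ∑ s, μ s = 1)
    (hπ0 : ∀ s a, 0 ≤ π s a) (hπ1 : ∀ s, ∑ a, π s a = 1) (hγ0 : 0 ≤ γ) (hγ1 : γ < 1)
    {R : S → A → ℝ} {V : S → ℝ}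
    (hV : ∀ s, V s = ∑ a, π s a * (R s a + γ * ∑ s', P s a s' * V s')) :
    Jret P μ γ R π = ∑ s, μ s * V s := by
  refine tsum_pow_mul_eq_of_telescope hγ0 hγ1 (u := fun t => ∑ s, pDist P μ π t s * V s)
    (fun t => ?_) (abs_sum_pDist_mul_le hP0 hP1 hμ0 hμ1 hπ0 hπ1 V)
  rw [sum_pDist_succ_mul, Finset.mul_sum, ← Finset.sum_add_distrib]
  refine Finset.sum_congr rfl fun s _ => ?_
  rw [hV s, Finset.mul_sum, Finset.mul_sum, Finset.mul_sum, ← Finset.sum_add_distrib]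
  exact Finset.sum_congr rfl fun a _ => by ring

lemma Jret_eq_sum_dvisit_mul (hP0 : ∀ s a s', 0 ≤ P s a s') (hP1 : ∀ s a, ∑ s', P s a s' = 1)
    (hμ0 : ∀ s, 0 ≤ μ s) (hμ1 : ∑ s, μ s = 1) (hπ0 : ∀ s a, 0 ≤ π s a)
    (hπ1 : ∀ s, ∑ a, π s a = 1) (hγ0 : 0 ≤ γ) (hγ1 : γ < 1) (R : S → A → ℝ) :
    Jret P μ γ R π = (1 - γ)⁻¹ * ∑ s, dvisit P μ γ π s * ∑ a, π s a * R s a := by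
  have hsum := summable_pow_mul_pDist hP0 hP1 hμ0 hμ1 hπ0 hπ1 hγ0 hγ1
  have hterm : ∀ t, γ ^ t * ∑ s, ∑ a, pDist P μ π t s * π s a * R s a =
      ∑ s, γ ^ t * pDist P μ π t s * ∑ a, π s a * R s a := fun t => by
    simp only [Finset.mul_sum, mul_assoc]
  rw [Jret, tsum_congr hterm, Summable.tsum_finsetSum fun s _ => (hsum s).mul_right _,
    Finset.mul_sum]
  refine Finset.sum_congr rfl fun s _ => ?_
  rw [tsum_mul_right, dvisit, ← mul_assoc, inv_mul_cancel_left₀ (by linarith)]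

lemma dvisit_nonneg (hP0 : ∀ s a s', 0 ≤ P s a s') (hμ0 : ∀ s, 0 ≤ μ s)
    (hπ0 : ∀ s a, 0 ≤ π s a) (hγ0 : 0 ≤ γ) (hγ1 : γ < 1) (s : S) : 0 ≤ dvisit P μ γ π s :=
  mul_nonneg (by linarith) <|
    tsum_nonneg fun t => mul_nonneg (pow_nonneg hγ0 t) (pDist_nonneg hP0 hμ0 hπ0 t s)

lemma sum_dvisit (hP0 : ∀ s a s', 0 ≤ P s a s') (hP1 : ∀ s a, ∑ s', P s a s' = 1)
    (hμ0 : ∀ s, 0 ≤ μ s) (hμ1 : ∑ s, μ s = 1) (hπ0 : ∀ s a, 0 ≤ π s a)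
    (hπ1 : ∀ s, ∑ a, π s a = 1) (hγ0 : 0 ≤ γ) (hγ1 : γ < 1) :
    ∑ s, dvisit P μ γ π s = 1 := by
  simp only [dvisit, ← Finset.mul_sum]
  rw [← Summable.tsum_finsetSum fun s _ =>
    summable_pow_mul_pDist hP0 hP1 hμ0 hμ1 hπ0 hπ1 hγ0 hγ1 s]
  simp only [← Finset.mul_sum, sum_pDist hP1 hμ1 hπ1, mul_one, tsum_geometric_of_lt_one hγ0 hγ1]
  exact mul_inv_cancel₀ (by linarith)

/-- The performance difference lemma. -/
theorem Jret_sub_Jret_eq {π' : S → A → ℝ} (hP0 : ∀ s a s', 0 ≤ P s a s')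
    (hP1 : ∀ s a, ∑ s', P s a s' = 1) (hμ0 : ∀ s, 0 ≤ μ s) (hμ1 : ∑ s, μ s = 1)
    (hπ0 : ∀ s a, 0 ≤ π s a) (hπ1 : ∀ s, ∑ a, π s a = 1)
    (hπ'0 : ∀ s a, 0 ≤ π' s a) (hπ'1 : ∀ s, ∑ a, π' s a = 1) (hγ0 : 0 ≤ γ) (hγ1 : γ < 1)
    {R : S → A → ℝ} {V' : S → ℝ}
    (hV' : ∀ s, V' s = ∑ a, π' s a * (R s a + γ * ∑ s', P s a s' * V' s')) :
    Jret P μ γ R π - Jret P μ γ R π' =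
      (1 - γ)⁻¹ * ∑ s, dvisit P μ γ π s * ∑ a, π s a * Adv P γ R V' s a := by
  -- `V'` is also the value of `π` for the shifted reward `R - A'`, so both returns equal `∑ μ V'`
  have hshift : ∀ s, V' s = ∑ a, π s a *
      ((R s a - Adv P γ R V' s a) + γ * ∑ s', P s a s' * V' s') := fun s =>
    calc V' s = ∑ a, π s a * V' s := by rw [← Finset.sum_mul, hπ1, one_mul]
      _ = _ := Finset.sum_congr rfl fun a _ => by rw [Adv]; ring
  rw [Jret_eq_sum_mul_of_bellman hP0 hP1 hμ0 hμ1 hπ'0 hπ'1 hγ0 hγ1 hV',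
    ← Jret_eq_sum_mul_of_bellman hP0 hP1 hμ0 hμ1 hπ0 hπ1 hγ0 hγ1 hshift,
    Jret_eq_sum_dvisit_mul hP0 hP1 hμ0 hμ1 hπ0 hπ1 hγ0 hγ1,
    Jret_eq_sum_dvisit_mul hP0 hP1 hμ0 hμ1 hπ0 hπ1 hγ0 hγ1]
  simp only [← mul_sub, ← Finset.sum_sub_distrib, sub_sub_cancel]

end MDP

theorem stmt_5_general {S A : Type*} [Fintype S] [Fintype A]
    (R : S → A → ℝ) (P : S → A → S → ℝ)
    (hP0 : ∀ s a s', 0 ≤ P s a s') (hP1 : ∀ s a, ∑ s', P s a s' = 1)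
    (γ : ℝ) (hγ0 : 0 < γ) (hγ1 : γ < 1)
    (μ : S → ℝ) (hμ0 : ∀ s, 0 ≤ μ s) (hμ1 : ∑ s, μ s = 1)
    (πb : S → A → ℝ) (hπb0 : ∀ s a, 0 < πb s a) (hπb1 : ∀ s, ∑ a, πb s a = 1)
    (π' : S → A → ℝ) (hπ'0 : ∀ s a, 0 ≤ π' s a) (hπ'1 : ∀ s, ∑ a, π' s a = 1)
    (V' : S → ℝ)
    (hV' : ∀ s, V' s = ∑ a, π' s a * (R s a + γ * ∑ s', P s a s' * V' s'))
    (β : ℝ)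
    (hadv : ∀ s, β ≤ ∑ a, πb s a * Adv P γ R V' s a)
    (π : S → A → ℝ) (hπ0 : ∀ s a, 0 < π s a) (hπ1 : ∀ s, ∑ a, π s a = 1) :
    Jret P μ γ R π - Jret P μ γ R π' ≥
      β / (1 - γ) -
        ((⨆ s, ⨆ a, |Adv P γ R V' s a|) / (1 - γ)) *
          Real.sqrt (2 * ∑ s, dvisit P μ γ π s * KL (π s) (πb s)) := by
  set E := ⨆ s, ⨆ a, |Adv P γ R V' s a|
  have hE0 : 0 ≤ E := Real.iSup_nonneg fun s => Real.iSup_nonneg fun a => abs_nonneg _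
  have hAdv_le : ∀ s a, |Adv P γ R V' s a| ≤ E := fun s a =>
    (le_ciSup (f := fun a => |Adv P γ R V' s a|) (Finite.bddAbove_range _) a).trans
      (le_ciSup (f := fun s => ⨆ a, |Adv P γ R V' s a|) (Finite.bddAbove_range _) s)
  have hπ0' : ∀ s a, 0 ≤ π s a := fun s a => (hπ0 s a).le
  have hstate : ∀ s, β - E * Real.sqrt (2 * KL (π s) (πb s)) ≤ ∑ a, π s a * Adv P γ R V' s a :=
    fun s => by
      have := abs_sum_mul_sub_sum_mul_le (hπ0' s) (hπb0 s) (hπ1 s) (hπb1 s) hE0 (hAdv_le s)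
      linarith [(abs_le.1 this).1, hadv s]
  have hmean := sub_mul_sqrt_sum_le_sum_mul (dvisit_nonneg hP0 hμ0 hπ0' hγ0.le hγ1)
    (sum_dvisit hP0 hP1 hμ0 hμ1 hπ0' hπ1 hγ0.le hγ1)
    (fun s => mul_nonneg zero_le_two (KL_nonneg (hπ0' s) (hπb0 s) (hπ1 s) (hπb1 s))) hE0 hstate
  simp only [mul_left_comm _ (2 : ℝ), ← Finset.mul_sum] at hmean
  rw [ge_iff_le, Jret_sub_Jret_eq hP0 hP1 hμ0 hμ1 hπ0' hπ1 hπ'0 hπ'1 hγ0.le hγ1 hV']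
  calc β / (1 - γ) - E / (1 - γ) * Real.sqrt (2 * ∑ s, dvisit P μ γ π s * KL (π s) (πb s))
      = (1 - γ)⁻¹ * (β - E * Real.sqrt (2 * ∑ s, dvisit P μ γ π s * KL (π s) (πb s))) := by ring
    _ ≤ _ := mul_le_mul_of_nonneg_left hmean (inv_nonneg.2 (by linarith))

/-- If the behavior policy `π_b` has advantage at least `β > 0` over `π'` in every state, then
for any policy `π`,
`J_R(π) − J_R(π') ≥ β/(1−γ) − (ε'/(1−γ)) √(2 D^π_KL(π, π_b))` with `ε' = max_{s,a} |A_R^{π'}(s,a)|`. -/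
theorem stmt_5 {S A : Type*} [Fintype S] [Fintype A] [Nonempty S] [Nonempty A]
    (R : S → A → ℝ) (P : S → A → S → ℝ)
    (hP0 : ∀ s a s', 0 ≤ P s a s') (hP1 : ∀ s a, ∑ s', P s a s' = 1)
    (γ : ℝ) (hγ0 : 0 < γ) (hγ1 : γ < 1)
    (μ : S → ℝ) (hμ0 : ∀ s, 0 ≤ μ s) (hμ1 : ∑ s, μ s = 1)
    (πb : S → A → ℝ) (hπb0 : ∀ s a, 0 < πb s a) (hπb1 : ∀ s, ∑ a, πb s a = 1)
    (π' : S → A → ℝ) (hπ'0 : ∀ s a, 0 ≤ π' s a) (hπ'1 : ∀ s, ∑ a, π' s a = 1)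
    (V' : S → ℝ)
    (hV' : ∀ s, V' s = ∑ a, π' s a * (R s a + γ * ∑ s', P s a s' * V' s'))
    (β : ℝ) (hβ : 0 < β)
    (hadv : ∀ s, β ≤ ∑ a, πb s a * Adv P γ R V' s a)
    (π : S → A → ℝ) (hπ0 : ∀ s a, 0 < π s a) (hπ1 : ∀ s, ∑ a, π s a = 1) :
    Jret P μ γ R π - Jret P μ γ R π' ≥
      β / (1 - γ) -
        ((⨆ s, ⨆ a, |Adv P γ R V' s a|) / (1 - γ)) *
          Real.sqrt (2 * ∑ s, dvisit P μ γ π s * KL (π s) (πb s)) :=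
  stmt_5_general R P hP0 hP1 γ hγ0 hγ1 μ hμ0 hμ1 πb hπb0 hπb1 π' hπ'0 hπ'1 V' hV' β hadv π hπ0 hπ1
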